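/- arXiv:1702.08012 — 3 statements merged into one kernel-verified Lean document; each statement's English description precedes it below -/
import Mathlib

section
/- For every prime power q ≥ 2 and every integer d > 2 with (q, d) ≠ (2, 6), there exists a prime ℓ that divides q^d − 1 but does not divide q^f − 1 for any integer 1 ≤ f < d. -/
/-!
If a prime `ℓ` divides `Φ_d(q)` and `d = ℓ ^ k * m` with `ℓ ∤ m`, then modulo `ℓ` the polynomial
`Φ_d` is a power of `Φ_m`, so `q` has multiplicative order exactly `m` modulo `ℓ`, and `m ∣ ℓ - 1`.
For `k = 0` this makes `ℓ` a primitive prime divisor of `q ^ d - 1`. For `k > 0` it forces `ℓ` to be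
the largest prime factor of `d`, and a lifting-the-exponent argument shows `ℓ ^ 2 ∤ Φ_d(q)` when
`d > 2`. So if `q ^ d - 1` had no primitive prime divisor, `Φ_d(q)` would equal this prime `ℓ ∣ d`.
This contradicts the size estimate `Φ_d(q) > (q - 1) ^ φ(d)` when `q ≥ 3`; for `q = 2` one compares
instead `Φ_{mℓ}(2) Φ_m(2) = Φ_m(2 ^ ℓ)`, and this only fails for `d = 6`.
-/

open Polynomial Finset

theorem ZMod.intCast_pow_eq_one_iff_dvd {n e : ℕ} {x : ℤ} :
    (x : ZMod n) ^ e = 1 ↔ (n : ℤ) ∣ x ^ e - 1 := by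
  rw [← ZMod.intCast_zmod_eq_zero_iff_dvd, Int.cast_sub, Int.cast_pow, Int.cast_one, sub_eq_zero]

theorem ZMod.natCast_pow_eq_one_iff_dvd {n q e : ℕ} (hq : q ≠ 0) :
    (q : ZMod n) ^ e = 1 ↔ n ∣ q ^ e - 1 := by
  rw [← ZMod.natCast_eq_zero_iff, Nat.cast_sub (Nat.one_le_pow _ _ (Nat.pos_of_ne_zero hq)),
    Nat.cast_pow, Nat.cast_one, sub_eq_zero]

theorem Int.not_sq_dvd_geom_sum_of_odd_prime {ℓ : ℕ} (hℓ : ℓ.Prime) (hodd : Odd ℓ) {y : ℤ}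
    (hy : (ℓ : ℤ) ∣ y - 1) : ¬(ℓ : ℤ) ^ 2 ∣ ∑ i ∈ Finset.range ℓ, y ^ i := by
  have hℓ' := Nat.prime_iff_prime_int.mp hℓ
  have hy' : ¬(ℓ : ℤ) ∣ y := fun h ↦ hℓ'.not_dvd_one (by simpa using dvd_sub h hy)
  have hmult := emultiplicity_geom_sum₂_eq_one hℓ' hodd (y := 1) hy hy'
  simp only [one_pow, mul_one] at hmult
  rw [← emultiplicity_lt_iff_not_dvd, hmult]
  norm_num

theorem Nat.three_mul_add_one_lt_two_pow {n : ℕ} (hn : 5 ≤ n) : 3 * n + 1 < 2 ^ n := by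
  induction n, hn using Nat.le_induction with
  | base => norm_num
  | succ n _ ih => rw [pow_succ]; omega

namespace Polynomial

theorem natCast_dvd_cyclotomic_eval_iff {ℓ d : ℕ} {x : ℤ} :
    (ℓ : ℤ) ∣ (cyclotomic d ℤ).eval x ↔ (cyclotomic d (ZMod ℓ)).IsRoot (x : ZMod ℓ) := by
  rw [← ZMod.intCast_zmod_eq_zero_iff_dvd, IsRoot.def, ← eq_intCast (Int.castRingHom (ZMod ℓ)),
    ← eq_intCast (Int.castRingHom (ZMod ℓ)) x, cyclotomic.eval_apply]

theorem cyclotomic_mul_dvd_geom_sum {n p : ℕ} (hn : n ≠ 0) (hp : 1 < p) :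
    cyclotomic (n * p) ℤ ∣ ∑ i ∈ range p, (X ^ n) ^ i := by
  have hmem : n ∈ (n * p).properDivisors :=
    Nat.mem_properDivisors.mpr ⟨dvd_mul_right n p, lt_mul_right (by omega) hp⟩
  have hX : (X ^ n - 1 : ℤ[X]) ≠ 0 := X_pow_sub_C_ne_zero (by omega) 1
  rw [← mul_dvd_mul_iff_left hX, mul_comm _ (∑ i ∈ range p, _), geom_sum_mul, ← pow_mul]
  exact X_pow_sub_one_mul_cyclotomic_dvd_X_pow_sub_one_of_dvd ℤ hmem

theorem prime_lt_cyclotomic_eval_of_three_le {ℓ d : ℕ} (hℓ : ℓ.Prime) (hd : 2 ≤ d) (hℓd : ℓ ∣ d)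
    {q : ℝ} (hq : 3 ≤ q) : (ℓ : ℝ) < (cyclotomic d ℝ).eval q := by
  have hφ : ℓ - 1 ≤ d.totient := Nat.totient_prime hℓ ▸
    Nat.le_of_dvd (Nat.totient_pos.mpr (by omega)) (Nat.totient_dvd_of_dvd hℓd)
  have hℓ2 : ℓ ≤ 2 ^ (ℓ - 1) := by have := Nat.lt_two_pow_self (n := ℓ - 1); omega
  calc (ℓ : ℝ) ≤ 2 ^ (ℓ - 1) := by exact_mod_cast hℓ2
    _ ≤ 2 ^ d.totient := pow_le_pow_right₀ (by norm_num) hφ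
    _ ≤ (q - 1) ^ d.totient := pow_le_pow_left₀ (by norm_num) (by linarith) _
    _ < (cyclotomic d ℝ).eval q := sub_one_pow_totient_lt_cyclotomic_eval hd (by linarith)

theorem prime_lt_cyclotomic_mul_eval_of_dvd {ℓ n : ℕ} (hℓ : ℓ.Prime) (hn : n ≠ 0) (hℓn : ℓ ∣ n)
    {q : ℝ} (hq : 2 ≤ q) : (ℓ : ℝ) < (cyclotomic (n * ℓ) ℝ).eval q := by
  rw [← cyclotomic_expand_eq_cyclotomic hℓ hℓn, expand_eval]
  have hn2 : 2 ≤ n := (Nat.le_of_dvd (Nat.pos_of_ne_zero hn) hℓn).trans' hℓ.two_le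
  have hqℓ : (2 : ℝ) ^ ℓ ≤ q ^ ℓ := pow_le_pow_left₀ (by norm_num) hq ℓ
  have hℓ2 : (ℓ : ℝ) + 1 ≤ 2 ^ ℓ := by exact_mod_cast Nat.lt_two_pow_self
  have : (2 : ℝ) ≤ ℓ := by exact_mod_cast hℓ.two_le
  calc (ℓ : ℝ) ≤ q ^ ℓ - 1 := by linarith
    _ ≤ (q ^ ℓ - 1) ^ n.totient :=
      le_self_pow₀ (by linarith) (Nat.totient_pos.mpr (by omega)).ne'
    _ < (cyclotomic n ℝ).eval (q ^ ℓ) := sub_one_pow_totient_lt_cyclotomic_eval hn2 (by linarith)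

theorem prime_lt_cyclotomic_prime_eval {ℓ : ℕ} [hℓ : Fact ℓ.Prime] {q : ℝ} (hq : 2 ≤ q) :
    (ℓ : ℝ) < (cyclotomic ℓ ℝ).eval q := by
  rw [cyclotomic_prime, eval_finsetSum]
  simp only [eval_pow, eval_X]
  calc (ℓ : ℝ) = ∑ _i ∈ range ℓ, (1 : ℝ) := by simp
    _ < ∑ i ∈ range ℓ, q ^ i := by
      refine sum_lt_sum (fun i _ ↦ one_le_pow₀ (by linarith)) ⟨1, ?_, by simp; linarith⟩
      simpa using hℓ.out.one_lt

theorem prime_lt_cyclotomic_mul_prime_eval_two {ℓ m : ℕ} (hℓ : ℓ.Prime) (hℓ5 : 5 ≤ ℓ)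
    (hm : ¬ℓ ∣ m) : (ℓ : ℝ) < (cyclotomic (m * ℓ) ℝ).eval 2 := by
  have hexp := congrArg (eval (2 : ℝ)) (cyclotomic_expand_eq_cyclotomic_mul hℓ hm ℝ)
  rw [expand_eval, eval_mul] at hexp
  obtain ⟨s, hs⟩ : ∃ s, m.totient = s + 1 :=
    Nat.exists_eq_add_one.mpr (Nat.totient_pos.mpr (Nat.pos_of_ne_zero (by rintro rfl; simp at hm)))
  have hℓ2 : (3 * ℓ + 1 : ℝ) < 2 ^ ℓ := by exact_mod_cast Nat.three_mul_add_one_lt_two_pow hℓ5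
  have : (5 : ℝ) ≤ ℓ := by exact_mod_cast hℓ5
  have hlow := sub_one_pow_totient_le_cyclotomic_eval (q := 2 ^ ℓ) (by linarith) m
  have hup := cyclotomic_eval_le_add_one_pow_totient (q := 2) (by norm_num) m
  have hpos : 0 < (cyclotomic m ℝ).eval 2 := cyclotomic_pos' m (by norm_num)
  rw [hs] at hlow hup
  norm_num at hup
  refine lt_of_mul_lt_mul_right ?_ hpos.le
  calc (ℓ : ℝ) * (cyclotomic m ℝ).eval 2 ≤ ℓ * 3 ^ (s + 1) := by gcongr
    _ = 3 ^ s * (3 * ℓ) := by ring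
    _ < (2 ^ ℓ - 1) ^ s * (2 ^ ℓ - 1) :=
      mul_lt_mul' (pow_le_pow_left₀ (by norm_num) (by linarith) s) (by linarith)
        (by positivity) (pow_pos (by linarith) s)
    _ = (2 ^ ℓ - 1) ^ (s + 1) := (pow_succ _ _).symm
    _ ≤ _ := hexp ▸ hlow

section Prime

variable {ℓ : ℕ} [Fact ℓ.Prime]

theorem isPrimitiveRoot_of_dvd_cyclotomic_eval {k m : ℕ} (hm : ¬ℓ ∣ m) {x : ℤ}
    (h : (ℓ : ℤ) ∣ (cyclotomic (ℓ ^ k * m) ℤ).eval x) : IsPrimitiveRoot (x : ZMod ℓ) m := by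
  have := NeZero.of_not_dvd (ZMod ℓ) hm
  exact isRoot_cyclotomic_prime_pow_mul_iff_of_charP.mp (natCast_dvd_cyclotomic_eval_iff.mp h)

theorem dvd_sub_one_of_dvd_cyclotomic_eval {k m : ℕ} (hm : ¬ℓ ∣ m) {x : ℤ}
    (h : (ℓ : ℤ) ∣ (cyclotomic (ℓ ^ k * m) ℤ).eval x) : m ∣ ℓ - 1 := by
  have hζ := isPrimitiveRoot_of_dvd_cyclotomic_eval hm h
  have hm0 : m ≠ 0 := fun h0 ↦ hm (h0 ▸ dvd_zero ℓ)
  exact hζ.eq_orderOf ▸ ZMod.orderOf_dvd_card_sub_one (hζ.ne_zero hm0)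

theorem lt_of_dvd_cyclotomic_eval {d p : ℕ} (hd : d ≠ 0) {x : ℤ}
    (h : (ℓ : ℤ) ∣ (cyclotomic d ℤ).eval x) (hp : p.Prime) (hpd : p ∣ d) (hpℓ : p ≠ ℓ) :
    p < ℓ := by
  have hℓ : ℓ.Prime := Fact.out
  obtain ⟨k, m, hm, rfl⟩ := Nat.exists_eq_pow_mul_and_not_dvd hd ℓ hℓ.ne_one
  have hpm : p ∣ m := ((Nat.coprime_primes hp hℓ).mpr hpℓ |>.pow_right k).dvd_of_dvd_mul_left hpd
  have hm0 : m ≠ 0 := fun h0 ↦ hm (h0 ▸ dvd_zero ℓ)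
  have := hℓ.two_le
  have := Nat.le_of_dvd (by omega) (dvd_sub_one_of_dvd_cyclotomic_eval hm h)
  have := Nat.le_of_dvd (by omega) hpm
  omega

theorem eq_of_dvd_cyclotomic_eval_of_dvd {p d : ℕ} (hd : d ≠ 0) {x : ℤ} (hp : p.Prime)
    (hpx : (p : ℤ) ∣ (cyclotomic d ℤ).eval x) (hpd : p ∣ d)
    (hℓx : (ℓ : ℤ) ∣ (cyclotomic d ℤ).eval x) (hℓd : ℓ ∣ d) : p = ℓ := by
  by_contra hne
  have := lt_of_dvd_cyclotomic_eval hd hℓx hp hpd hne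
  have : Fact p.Prime := ⟨hp⟩
  have := lt_of_dvd_cyclotomic_eval hd hpx Fact.out hℓd (Ne.symm hne)
  omega

/-- `Φ_d(x)` divides `(y ^ ℓ - 1) / (y - 1)` for `y = x ^ (d / ℓ) ≡ 1 [ZMOD ℓ]`, which by lifting
the exponent is divisible by `ℓ` exactly once; for `ℓ = 2` the number `d` is a power of `2` and `y`
is an odd square, so `y + 1 ≡ 2 [ZMOD 4]`. -/
theorem not_sq_dvd_cyclotomic_eval {d : ℕ} (hd : 2 < d) (hℓd : ℓ ∣ d) {x : ℤ}
    (h : (ℓ : ℤ) ∣ (cyclotomic d ℤ).eval x) : ¬(ℓ : ℤ) ^ 2 ∣ (cyclotomic d ℤ).eval x := by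
  have hℓ : ℓ.Prime := Fact.out
  obtain ⟨k, m, hm, rfl⟩ := Nat.exists_eq_pow_mul_and_not_dvd (by omega : d ≠ 0) ℓ hℓ.ne_one
  have hk : k ≠ 0 := by rintro rfl; simp_all
  have hm0 : m ≠ 0 := fun h0 ↦ hm (h0 ▸ dvd_zero ℓ)
  have hζ := isPrimitiveRoot_of_dvd_cyclotomic_eval hm h
  set e := ℓ ^ (k - 1) * m
  have hde : ℓ ^ k * m = e * ℓ := by
    rw [mul_right_comm, ← pow_succ, Nat.sub_add_cancel (Nat.one_le_iff_ne_zero.mpr hk)]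
  have hy : (ℓ : ℤ) ∣ x ^ e - 1 :=
    ZMod.intCast_pow_eq_one_iff_dvd.mp (hζ.pow_eq_one_iff_dvd e |>.mpr (dvd_mul_left m _))
  have hgeom : (cyclotomic (ℓ ^ k * m) ℤ).eval x ∣ ∑ i ∈ range ℓ, (x ^ e) ^ i := by
    simpa [eval_finsetSum, hde] using eval_dvd (x := x)
      (cyclotomic_mul_dvd_geom_sum (mul_ne_zero (pow_ne_zero _ hℓ.ne_zero) hm0) hℓ.one_lt)
  refine fun h2 ↦ ?_
  rcases hℓ.eq_two_or_odd' with rfl | hodd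
  · obtain rfl : m = 1 := Nat.dvd_one.mp (dvd_sub_one_of_dvd_cyclotomic_eval hm h)
    have hk2 : 2 ≤ k := by
      by_contra!
      interval_cases k <;> simp at hd
    have hx : Odd x := by
      obtain ⟨c, hc⟩ := hy
      exact ((Int.odd_pow (n := e)).mp ⟨c, by push_cast at hc; linarith⟩).resolve_right
        (by positivity)
    have hez : x ^ e = (x ^ 2 ^ (k - 2)) ^ 2 := by
      rw [← pow_mul, ← pow_succ]
      congr 1
      simp only [e, mul_one]
      congr 1
      omega
    have h4 := h2.trans hgeom
    rw [hez] at h4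
    have := Int.sq_mod_four_eq_one_of_odd (hx.pow (n := 2 ^ (k - 2)))
    simp only [sum_range_succ, range_one, sum_singleton, pow_zero, pow_one] at h4
    norm_num at h4
    omega
  · exact Int.not_sq_dvd_geom_sum_of_odd_prime hℓ hodd hy (h2.trans hgeom)

theorem prime_lt_cyclotomic_eval {q d : ℕ} (hq : 2 ≤ q) (hd : 2 < d) (hexc : (q, d) ≠ (2, 6))
    (hℓd : ℓ ∣ d) (h : (ℓ : ℤ) ∣ (cyclotomic d ℤ).eval (q : ℤ)) :
    (ℓ : ℤ) < (cyclotomic d ℤ).eval (q : ℤ) := by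
  have hℓ : ℓ.Prime := Fact.out
  suffices (ℓ : ℝ) < (cyclotomic d ℝ).eval (q : ℝ) by
    have hcast := cyclotomic.eval_apply (q : ℤ) d (Int.castRingHom ℝ)
    simp only [eq_intCast, Int.cast_natCast] at hcast
    exact_mod_cast hcast ▸ this
  rcases hq.lt_or_eq with hq3 | rfl
  · exact prime_lt_cyclotomic_eval_of_three_le hℓ hd.le hℓd (by exact_mod_cast hq3)
  obtain ⟨k, m, hm, rfl⟩ := Nat.exists_eq_pow_mul_and_not_dvd (by omega : d ≠ 0) ℓ hℓ.ne_one
  have hk : k ≠ 0 := by rintro rfl; simp_all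
  have hm0 : m ≠ 0 := fun h0 ↦ hm (h0 ▸ dvd_zero ℓ)
  have hmℓ := Nat.le_of_dvd (by have := hℓ.two_le; omega) (dvd_sub_one_of_dvd_cyclotomic_eval hm h)
  obtain rfl | hk2 := (Nat.one_le_iff_ne_zero.mpr hk).eq_or_lt
  · rw [pow_one] at hexc ⊢
    obtain rfl | hm2 := (Nat.one_le_iff_ne_zero.mpr hm0).eq_or_lt
    · simpa using prime_lt_cyclotomic_prime_eval (ℓ := ℓ) (q := 2) le_rfl
    have hℓ5 : 5 ≤ ℓ := by
      by_contra!
      have hℓ3 : ℓ = 3 := by interval_cases ℓ <;> first | omega | norm_num at hℓ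
      subst hℓ3
      obtain rfl : m = 2 := by omega
      exact hexc rfl
    rw [mul_comm]
    exact_mod_cast prime_lt_cyclotomic_mul_prime_eval_two hℓ hℓ5 hm
  · have hd' : ℓ ^ k * m = ℓ ^ (k - 1) * m * ℓ := by
      rw [mul_right_comm, ← pow_succ, Nat.sub_add_cancel hk2.le]
    rw [hd']
    exact_mod_cast prime_lt_cyclotomic_mul_eval_of_dvd hℓ
      (mul_ne_zero (pow_ne_zero _ hℓ.ne_zero) hm0)
      (dvd_mul_of_dvd_left (dvd_pow_self ℓ (by omega)) m) (q := 2) le_rfl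

end Prime

theorem exists_prime_dvd_cyclotomic_eval_not_dvd {q d : ℕ} (hq : 2 ≤ q) (hd : 2 < d)
    (hexc : (q, d) ≠ (2, 6)) :
    ∃ ℓ : ℕ, ℓ.Prime ∧ (ℓ : ℤ) ∣ (cyclotomic d ℤ).eval (q : ℤ) ∧ ¬ℓ ∣ d := by
  set Φ := (cyclotomic d ℤ).eval (q : ℤ)
  by_contra! hall
  have hΦ : 1 < Φ.natAbs :=
    (sub_one_lt_natAbs_cyclotomic_eval (by omega) (by omega)).trans_le' (by omega)
  set ℓ := Φ.natAbs.minFac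
  have hℓ : ℓ.Prime := Nat.minFac_prime hΦ.ne'
  have : Fact ℓ.Prime := ⟨hℓ⟩
  have hℓΦ : (ℓ : ℤ) ∣ Φ := Int.natCast_dvd.mpr (Nat.minFac_dvd _)
  have hℓd := hall ℓ hℓ hℓΦ
  have hunique : ∀ {p : ℕ}, p.Prime → p ∣ Φ.natAbs → p = ℓ := fun hp hpΦ ↦
    eq_of_dvd_cyclotomic_eval_of_dvd (by omega) hp (Int.natCast_dvd.mpr hpΦ)
      (hall _ hp (Int.natCast_dvd.mpr hpΦ)) hℓΦ hℓd
  have hΦℓ : Φ.natAbs = ℓ := by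
    have hpow := Nat.eq_prime_pow_of_unique_prime_dvd (by omega) hunique
    rcases h : Φ.natAbs.primeFactorsList.length with _ | _ | k <;> rw [h] at hpow
    · rw [pow_zero] at hpow
      omega
    · rwa [pow_one] at hpow
    · refine absurd ?_ (not_sq_dvd_cyclotomic_eval hd hℓd hℓΦ)
      rw [← Int.natCast_pow, Int.natCast_dvd, hpow]
      exact pow_dvd_pow ℓ (by omega)
  have hpos : 0 < Φ := cyclotomic_pos' d (by exact_mod_cast hq)
  have hlt : (ℓ : ℤ) < Φ := prime_lt_cyclotomic_eval hq hd hexc hℓd hℓΦ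
  omega

end Polynomial

theorem stmt_4_general (q d : ℕ) (hq2 : 2 ≤ q) (hd : 2 < d)
    (hexc : (q, d) ≠ (2, 6)) :
    ∃ ℓ : ℕ, ℓ.Prime ∧ ℓ ∣ q ^ d - 1 ∧ ∀ f : ℕ, 1 ≤ f → f < d → ¬ ℓ ∣ q ^ f - 1 := by
  obtain ⟨ℓ, hℓ, hℓΦ, hℓd⟩ := exists_prime_dvd_cyclotomic_eval_not_dvd hq2 hd hexc
  have : Fact ℓ.Prime := ⟨hℓ⟩
  have hζ : IsPrimitiveRoot (q : ZMod ℓ) d := by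
    have := isPrimitiveRoot_of_dvd_cyclotomic_eval (k := 0) hℓd (by rwa [pow_zero, one_mul])
    rwa [Int.cast_natCast] at this
  have hdvd_iff (f : ℕ) : ℓ ∣ q ^ f - 1 ↔ d ∣ f :=
    (ZMod.natCast_pow_eq_one_iff_dvd (by omega)).symm.trans (hζ.pow_eq_one_iff_dvd f)
  refine ⟨ℓ, hℓ, (hdvd_iff d).mpr dvd_rfl, fun f hf hfd hℓf ↦ ?_⟩
  exact absurd (Nat.le_of_dvd hf ((hdvd_iff f).mp hℓf)) (by omega)

/-- Zsigmondy's theorem: for every prime power `q ≥ 2` and every `d > 2` with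
`(q, d) ≠ (2, 6)` there is a prime dividing `q^d - 1` but no `q^f - 1` for `1 ≤ f < d`. -/
theorem stmt_4 (q d : ℕ) (hq : IsPrimePow q) (hq2 : 2 ≤ q) (hd : 2 < d)
    (hexc : (q, d) ≠ (2, 6)) :
    ∃ ℓ : ℕ, ℓ.Prime ∧ ℓ ∣ q ^ d - 1 ∧ ∀ f : ℕ, 1 ≤ f → f < d → ¬ ℓ ∣ q ^ f - 1 :=
  stmt_4_general q d hq2 hd hexc
end

section
/- Let A = S_3 × C, where S_3 is the symmetric group on 3 letters and C is any cyclic group. Suppose A acts on a set X with |X| = 3 in such a way that the elements of order 3 in the factor S_3 act non-trivially on X. Then the factor C acts trivially on X, the factor S_3 acts faithfully on X, and any two such actions of A on a 3-element set are equivalent as permutation representations (i.e., related by an A-equivariant bijection). -/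
/-!
A commutator argument shows that any homomorphism from `S₃` that kills no 3-cycle is injective,
so the `S₃`-factor maps onto `Perm X` (both have order 6). The `C`-factor then commutes with all
of `Perm X`, whose centre is trivial. The transposition `(0 1)` acts on the odd set `X` as an
involution, hence with a fixed point `x`, and the stabilizer of `x` is exactly `{1, (0 1)} × C`.
Two transitive actions with the same point stabilizer are isomorphic.
-/

open Equiv Function
open scoped commutatorElement

theorem Equiv.Perm.eq_one_of_forall_commute {X : Type*} [Fintype X] (hX : 3 ≤ Fintype.card X)
    {σ : Perm X} (hσ : ∀ τ : Perm X, Commute σ τ) : σ = 1 := by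
  classical
  refine Equiv.ext fun x => ?_
  by_contra hx
  rw [Perm.one_apply] at hx
  obtain ⟨z, -, hz⟩ := Finset.exists_mem_notMem_of_card_lt_card
    (s := {x, σ x}) (t := Finset.univ) ((Finset.card_le_two).trans_lt hX)
  rw [Finset.mem_insert, Finset.mem_singleton, not_or] at hz
  have h := congrArg (· x) (hσ (swap (σ x) z)).eq
  simp only [Perm.mul_apply, swap_apply_left,
    swap_apply_of_ne_of_ne (Ne.symm hx) (Ne.symm hz.1)] at h
  exact hz.2 h.symm

theorem Equiv.Perm.eq_of_apply_eq_self {X : Type*} [Fintype X] (hX : Fintype.card X = 3)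
    {x : X} {σ τ : Perm X} (hσ : σ ≠ 1) (hτ : τ ≠ 1) (hσx : σ x = x) (hτx : τ x = x) :
    σ = τ := by
  have hcard : Nat.card (MulAction.stabilizer (Perm X) x) = 2 := by
    have h := (MulAction.stabilizer (Perm X) x).card_mul_index
    rw [MulAction.index_stabilizer_of_transitive, Nat.card_perm, Nat.card_eq_fintype_card (α := X),
      hX, show Nat.factorial 3 = 2 * 3 from rfl] at h
    exact Nat.eq_of_mul_eq_mul_right (by norm_num) h
  obtain ⟨y, -, hy⟩ := (Nat.card_eq_two_iff' (1 : MulAction.stabilizer (Perm X) x)).1 hcard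
  exact congrArg Subtype.val <|
    (hy ⟨σ, hσx⟩ (Subtype.coe_ne_coe.1 hσ)).trans (hy ⟨τ, hτx⟩ (Subtype.coe_ne_coe.1 hτ)).symm

set_option maxRecDepth 10000 in
theorem Equiv.Perm.exists_commutator_pow_three_fin_three :
    ∀ s : Perm (Fin 3), s ≠ 1 → ∃ t : Perm (Fin 3), ⁅s, t⁆ ^ 3 = 1 ∧ ⁅s, t⁆ ≠ 1 := by
  decide

theorem injective_of_map_ne_one_of_orderOf_eq_three {G : Type*} [Group G] (ψ : Perm (Fin 3) →* G)
    (hψ : ∀ s, orderOf s = 3 → ψ s ≠ 1) : Injective ψ := by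
  refine (injective_iff_map_eq_one ψ).2 fun s hs => ?_
  by_contra hs1
  obtain ⟨t, ht3, ht1⟩ := Perm.exists_commutator_pow_three_fin_three s hs1
  have : Fact (Nat.Prime 3) := ⟨Nat.prime_three⟩
  exact hψ _ (orderOf_eq_prime ht3 ht1) <| by
    rw [map_commutatorElement, hs, commutatorElement_one_left]

theorem exists_equiv_apply_comm_of_apply_eq_self_iff {G X X' : Type*} [Group G]
    (ρ : G →* Perm X) (ρ' : G →* Perm X') (x : X) (x' : X')
    (hx : ∀ y, ∃ g, ρ g x = y) (hx' : ∀ y', ∃ g, ρ' g x' = y')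
    (hstab : ∀ g, ρ g x = x ↔ ρ' g x' = x') :
    ∃ e : X ≃ X', ∀ g y, e (ρ g y) = ρ' g (e y) := by
  have key : ∀ g h, ρ g x = ρ h x ↔ ρ' g x' = ρ' h x' := fun g h => by
    simpa [Perm.mul_apply, Equiv.eq_symm_apply, eq_comm] using hstab (h⁻¹ * g)
  choose f hf using hx
  let e : X → X' := fun y => ρ' (f y) x'
  have he : ∀ g, e (ρ g x) = ρ' g x' := fun g => (key _ _).1 (hf _)
  have he_inj : Injective e := fun y z hyz => by
    rw [← hf y, ← hf z]
    exact (key _ _).2 hyz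
  have he_surj : Surjective e := fun y' => by
    obtain ⟨g, rfl⟩ := hx' y'
    exact ⟨ρ g x, he g⟩
  refine ⟨Equiv.ofBijective e ⟨he_inj, he_surj⟩, fun g y => ?_⟩
  calc e (ρ g y) = e (ρ (g * f y) x) := by rw [map_mul, Perm.mul_apply, hf]
    _ = ρ' g (e y) := by rw [he, map_mul, Perm.mul_apply]

namespace PermFinThreeProd

variable {C X : Type*} [Group C] (ρ : Perm (Fin 3) × C →* Perm X)

theorem injective_apply_inl (hρ : ∀ s : Perm (Fin 3), orderOf s = 3 → ρ (s, 1) ≠ 1) :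
    Injective fun s : Perm (Fin 3) => ρ (s, 1) :=
  injective_of_map_ne_one_of_orderOf_eq_three (ρ.comp (MonoidHom.inl _ _)) hρ

variable [Fintype X] (hX : Fintype.card X = 3)
  (hρ : ∀ s : Perm (Fin 3), orderOf s = 3 → ρ (s, 1) ≠ 1)
include hX hρ

theorem surjective_apply_inl : Surjective fun s : Perm (Fin 3) => ρ (s, 1) :=
  ((Nat.bijective_iff_injective_and_card _).2
    ⟨injective_apply_inl ρ hρ, by
      simp [Nat.card_perm, Fintype.card_perm, Nat.card_eq_fintype_card, hX]⟩).2

theorem apply_inr_eq_one (c : C) : ρ (1, c) = 1 :=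
  Perm.eq_one_of_forall_commute hX.ge fun τ => by
    obtain ⟨s, rfl⟩ := surjective_apply_inl ρ hX hρ τ
    exact ((Commute.one_left s).prod (Commute.one_right c)).map ρ

theorem apply_eq_apply_fst (g : Perm (Fin 3) × C) : ρ g = ρ (g.1, 1) :=
  calc ρ g = ρ ((g.1, 1) * (1, g.2)) := by simp
    _ = ρ (g.1, 1) := by rw [map_mul, apply_inr_eq_one ρ hX hρ, mul_one]

theorem exists_apply_eq_self_iff : ∃ x : X, (∀ y, ∃ g, ρ g x = y) ∧
    ∀ g, ρ g x = x ↔ g.1 = 1 ∨ g.1 = swap 0 1 := by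
  classical
  have hinj := injective_apply_inl ρ hρ
  have hne : ∀ s, s ≠ 1 → ρ (s, 1) ≠ 1 := fun s hs h => hs (hinj (h.trans (map_one ρ).symm))
  have hsq : ρ (swap 0 1, 1) ^ 2 ^ 1 = 1 := by
    rw [pow_one, sq, ← map_mul, Prod.mk_mul_mk, swap_mul_self, mul_one, Prod.mk_one_one, map_one]
  obtain ⟨x, hx⟩ := Perm.exists_fixed_point_of_prime (p := 2) (by rw [hX]; decide) hsq
  refine ⟨x, fun y => ?_, fun g => ?_⟩
  · obtain ⟨s, hs⟩ := surjective_apply_inl ρ hX hρ (Equiv.swap x y)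
    exact ⟨(s, 1), by simp only [hs, swap_apply_left]⟩
  rw [apply_eq_apply_fst ρ hX hρ]
  refine ⟨fun hgx => or_iff_not_imp_left.2 fun hg1 => hinj ?_, ?_⟩
  · exact Perm.eq_of_apply_eq_self hX (hne _ hg1) (hne _ (by decide)) hgx hx
  · rintro (h | h) <;> simp [h, hx, Prod.mk_one_one]

end PermFinThreeProd

theorem stmt_11_general (C : Type*) [Group C]
    (X X' : Type*) [Fintype X] [Fintype X']
    (hX : Fintype.card X = 3) (hX' : Fintype.card X' = 3)
    (ρ : Equiv.Perm (Fin 3) × C →* Equiv.Perm X)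
    (ρ' : Equiv.Perm (Fin 3) × C →* Equiv.Perm X')
    (hρ : ∀ s : Equiv.Perm (Fin 3), orderOf s = 3 → ρ (s, 1) ≠ 1)
    (hρ' : ∀ s : Equiv.Perm (Fin 3), orderOf s = 3 → ρ' (s, 1) ≠ 1) :
    (∀ c : C, ρ (1, c) = 1) ∧
    (Function.Injective fun s : Equiv.Perm (Fin 3) => ρ (s, 1)) ∧
    (∃ e : X ≃ X', ∀ (g : Equiv.Perm (Fin 3) × C) (x : X), e (ρ g x) = ρ' g (e x)) := by
  obtain ⟨x, hx, hstab⟩ := PermFinThreeProd.exists_apply_eq_self_iff ρ hX hρ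
  obtain ⟨x', hx', hstab'⟩ := PermFinThreeProd.exists_apply_eq_self_iff ρ' hX' hρ'
  exact ⟨PermFinThreeProd.apply_inr_eq_one ρ hX hρ, PermFinThreeProd.injective_apply_inl ρ hρ,
    exists_equiv_apply_comm_of_apply_eq_self_iff ρ ρ' x x' hx hx' fun g => by rw [hstab, hstab']⟩

/-- Lemma 3.1: the group `S₃ × C` (`C` cyclic) has, up to permutation equivalence,
a unique action on a 3-element set in which the order-3 elements of the `S₃`-factor
act non-trivially; in any such action `C` acts trivially and `S₃` acts faithfully. -/
theorem stmt_11 (C : Type*) [Group C] [IsCyclic C]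
    (X X' : Type*) [Fintype X] [Fintype X']
    (hX : Fintype.card X = 3) (hX' : Fintype.card X' = 3)
    (ρ : Equiv.Perm (Fin 3) × C →* Equiv.Perm X)
    (ρ' : Equiv.Perm (Fin 3) × C →* Equiv.Perm X')
    (hρ : ∀ s : Equiv.Perm (Fin 3), orderOf s = 3 → ρ (s, 1) ≠ 1)
    (hρ' : ∀ s : Equiv.Perm (Fin 3), orderOf s = 3 → ρ' (s, 1) ≠ 1) :
    (∀ c : C, ρ (1, c) = 1) ∧
    (Function.Injective fun s : Equiv.Perm (Fin 3) => ρ (s, 1)) ∧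
    (∃ e : X ≃ X', ∀ (g : Equiv.Perm (Fin 3) × C) (x : X), e (ρ g x) = ρ' g (e x)) :=
  stmt_11_general C X X' hX hX' ρ ρ' hρ hρ'
end

section
/- Let q ≥ 2 and a ≥ 2 be integers with (q, a) ≠ (2, 2). Then there exists a prime ℓ dividing q^{2a−1} + 1 such that ℓ does not divide q^f − 1 for any 1 ≤ f < 2(2a−1). -/
/-!
A prime `ℓ` modulo which `q` has multiplicative order exactly `2m`, where `m = 2a - 1`, divides
`q^m + 1` and no `q^f - 1` with `0 < f < 2m`. A prime factor `ℓ` of `Φ_{2m}(q)` is such a prime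
unless `ℓ ∣ 2m`, and in that case `ordCompl[ℓ] (2m) ∣ ℓ - 1`, so `ℓ` is the largest prime factor
of `2m`; it is odd, and it divides `Φ_{2m}(q)` only once by lifting the exponent. So if no such
prime existed, `Φ_{2m}(q)` would be an odd prime `p ∣ m`. On the other hand, Möbius inversion
of `∏_{d ∣ m} Φ_{2d}(q) = q^m + 1` gives `log Φ_{2m}(q) ≥ φ(m) log q - ∑_{d ∣ m} q^{-d}`, hence
`q^φ(m) < 3 Φ_{2m}(q) = 3p`, which fails unless `(q, m) = (2, 3)`.
-/
open Polynomial Finset ArithmeticFunction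
open scoped ArithmeticFunction.Moebius

theorem Nat.prod_divisors_two_mul_of_odd {M : Type*} [CommMonoid M] (f : ℕ → M) {m : ℕ}
    (hm : Odd m) :
    ∏ d ∈ (2 * m).divisors, f d = (∏ d ∈ m.divisors, f d) * ∏ d ∈ m.divisors, f (2 * d) := by
  rw [Nat.divisors_mul, Finset.mul_def,
    prod_image (Nat.coprime_two_left.mpr hm).mul_injOn_divisors, prod_product,
    Nat.prime_two.divisors, prod_pair (by norm_num)]
  simp

theorem Polynomial.prod_cyclotomic_two_mul_of_odd (R : Type*) [CommRing R] [IsDomain R] {m : ℕ}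
    (hm : Odd m) : ∏ d ∈ m.divisors, cyclotomic (2 * d) R = X ^ m + 1 := by
  have h := prod_cyclotomic_eq_X_pow_sub_one (Nat.mul_pos two_pos hm.pos) R
  rw [Nat.prod_divisors_two_mul_of_odd _ hm, prod_cyclotomic_eq_X_pow_sub_one hm.pos] at h
  refine mul_left_cancel₀ (X_pow_sub_C_ne_zero hm.pos (1 : R)) ?_
  rw [C_1, h]
  ring

theorem Nat.sum_moebius_mul_eq_totient (R : Type*) [Ring R] (m : ℕ) :
    ∑ d ∈ m.divisors, (μ (m / d) : R) * d = m.totient := by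
  rcases m.eq_zero_or_pos with rfl | hm
  · simp
  have := (sum_eq_iff_sum_mul_moebius_eq (f := fun n => (n.totient : R)) (g := fun n => (n : R))).mp
    (fun n _ => by rw [← Nat.cast_sum, Nat.sum_totient]) m hm
  rwa [Nat.sum_divisorsAntidiagonal' (fun x y => (μ x : R) * y)] at this

theorem Nat.two_le_totient {n : ℕ} (hn : 2 < n) : 2 ≤ n.totient := by
  have := Nat.totient_even hn
  have := Nat.totient_pos.mpr (by omega : 0 < n)
  grind

theorem log_cyclotomic_two_mul_eval_of_odd {q : ℝ} (hq : 1 < q) {m : ℕ} (hm : Odd m) :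
    Real.log ((cyclotomic (2 * m) ℝ).eval q) =
      ∑ d ∈ m.divisors, (μ (m / d) : ℝ) * Real.log (q ^ d + 1) := by
  have hodd : ∀ a b : ℕ, a ∣ b → b ∈ {n | Odd n} → a ∈ {n | Odd n} :=
    fun a b hab hb => Odd.of_dvd_nat hb hab
  have := (sum_eq_iff_sum_mul_moebius_eq_on {n | Odd n} hodd
    (f := fun d => Real.log ((cyclotomic (2 * d) ℝ).eval q))
    (g := fun n => Real.log (q ^ n + 1))).mp (fun n _ hn => ?_) m hm.pos hm
  · rw [← this, Nat.sum_divisorsAntidiagonal' (fun x y => (μ x : ℝ) * Real.log (q ^ y + 1))]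
  · rw [← Real.log_prod (fun d _ => (cyclotomic_pos' _ hq).ne'), ← eval_prod,
      prod_cyclotomic_two_mul_of_odd ℝ hn]
    simp

theorem sum_inv_pow_le_one {q : ℝ} (hq : 2 ≤ q) {S : Finset ℕ} (hS : 0 ∉ S) :
    ∑ d ∈ S, (q ^ d)⁻¹ ≤ 1 := by
  have hx0 : 0 ≤ q⁻¹ := by positivity
  have hx1 : q⁻¹ ≤ 1 / 2 := by rw [one_div]; exact inv_anti₀ (by norm_num) hq
  have h := (summable_geometric_of_lt_one hx0 (by linarith)).sum_le_tsum (insert 0 S)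
    (fun _ _ => by positivity)
  rw [sum_insert hS, tsum_geometric_of_lt_one hx0 (by linarith), pow_zero] at h
  have : (1 - q⁻¹)⁻¹ ≤ 2 := by
    rw [inv_le_comm₀ (by linarith) (by norm_num)]; linarith
  simp only [inv_pow] at h
  linarith

theorem pow_totient_lt_three_mul_cyclotomic_two_mul_eval {q : ℝ} (hq : 2 ≤ q) {m : ℕ}
    (hm : Odd m) : q ^ m.totient < 3 * (cyclotomic (2 * m) ℝ).eval q := by
  have hq0 : 0 < q := by linarith
  have hΦ := cyclotomic_pos' (2 * m) (by linarith : 1 < q)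
  have hsplit (d : ℕ) : Real.log (q ^ d + 1) = d * Real.log q + Real.log (1 + (q ^ d)⁻¹) := by
    rw [← Real.log_pow, ← Real.log_mul (by positivity) (by positivity), mul_add, mul_one,
      mul_inv_cancel₀ (by positivity)]
  have hterm (d : ℕ) : -(q ^ d)⁻¹ ≤ (μ (m / d) : ℝ) * Real.log (1 + (q ^ d)⁻¹) := by
    have hy : 0 < (q ^ d)⁻¹ := by positivity
    have h0 : 0 ≤ Real.log (1 + (q ^ d)⁻¹) := Real.log_nonneg (by linarith)
    have h1 := Real.log_le_sub_one_of_pos (by linarith : 0 < 1 + (q ^ d)⁻¹)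
    have h2 : (-1 : ℝ) ≤ μ (m / d) := by exact_mod_cast (abs_le.mp abs_moebius_le_one).1
    nlinarith
  have hlog : m.totient * Real.log q - 1 ≤ Real.log ((cyclotomic (2 * m) ℝ).eval q) := by
    rw [log_cyclotomic_two_mul_eval_of_odd (by linarith) hm,
      ← Nat.sum_moebius_mul_eq_totient ℝ, sum_mul]
    simp_rw [hsplit, mul_add, sum_add_distrib, mul_assoc]
    have := sum_le_sum fun d (_ : d ∈ m.divisors) => hterm d
    have := sum_inv_pow_le_one hq (S := m.divisors) fun h => (Nat.pos_of_mem_divisors h).ne rfl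
    rw [sum_neg_distrib] at *
    linarith
  calc q ^ m.totient = Real.exp (m.totient * Real.log q) := by
        rw [← Real.log_pow, Real.exp_log (by positivity)]
    _ ≤ Real.exp (Real.log ((cyclotomic (2 * m) ℝ).eval q) + 1) := Real.exp_le_exp.mpr (by linarith)
    _ = Real.exp 1 * (cyclotomic (2 * m) ℝ).eval q := by
        rw [Real.exp_add, Real.exp_log hΦ, mul_comm]
    _ < 3 * (cyclotomic (2 * m) ℝ).eval q := by
        gcongr; exact Real.exp_one_lt_d9.trans (by norm_num)

section PrimeDivisorsOfCyclotomicValues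

variable {n ℓ : ℕ} [hℓ : Fact ℓ.Prime] {q : ℤ}

theorem isPrimitiveRoot_ordCompl_of_dvd_cyclotomic_eval (hn : n ≠ 0)
    (h : (ℓ : ℤ) ∣ (cyclotomic n ℤ).eval q) : IsPrimitiveRoot (q : ZMod ℓ) (ordCompl[ℓ] n) := by
  have : NeZero ((ordCompl[ℓ] n : ℕ) : ZMod ℓ) :=
    ⟨by rw [Ne, ZMod.natCast_eq_zero_iff]; exact Nat.not_dvd_ordCompl hℓ.out hn⟩
  rw [← isRoot_cyclotomic_prime_pow_mul_iff_of_charP (k := n.factorization ℓ),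
    Nat.ordProj_mul_ordCompl_eq_self, IsRoot.def, ← eq_intCast (Int.castRingHom _),
    cyclotomic.eval_apply, eq_intCast, ZMod.intCast_zmod_eq_zero_iff_dvd]
  exact h

theorem ordCompl_dvd_sub_one_of_dvd_cyclotomic_eval (hn : n ≠ 0)
    (h : (ℓ : ℤ) ∣ (cyclotomic n ℤ).eval q) : ordCompl[ℓ] n ∣ ℓ - 1 := by
  have hprim := isPrimitiveRoot_ordCompl_of_dvd_cyclotomic_eval hn h
  rw [hprim.eq_orderOf]
  exact ZMod.orderOf_dvd_card_sub_one (hprim.ne_zero (Nat.ordCompl_pos ℓ hn).ne')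

theorem lt_of_prime_dvd_of_dvd_cyclotomic_eval (hn : n ≠ 0)
    (h : (ℓ : ℤ) ∣ (cyclotomic n ℤ).eval q) {r : ℕ} (hr : r.Prime) (hrn : r ∣ n) (hrℓ : r ≠ ℓ) :
    r < ℓ := by
  have hr' : r ∣ ℓ - 1 := (Nat.dvd_ordCompl_of_dvd_not_dvd hrn
    fun hℓr => hrℓ ((Nat.prime_dvd_prime_iff_eq hℓ.out hr).mp hℓr).symm).trans
      (ordCompl_dvd_sub_one_of_dvd_cyclotomic_eval hn h)
  have := Nat.le_of_dvd (Nat.sub_pos_of_lt hℓ.out.one_lt) hr'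
  omega

theorem not_sq_dvd_cyclotomic_eval (hn : n ≠ 0) (hℓ2 : ℓ ≠ 2) (hℓn : ℓ ∣ n)
    (h : (ℓ : ℤ) ∣ (cyclotomic n ℤ).eval q) : ¬ (ℓ : ℤ) ^ 2 ∣ (cyclotomic n ℤ).eval q := by
  obtain ⟨k, rfl⟩ := hℓn
  have hk0 : 0 < k := Nat.pos_of_ne_zero (right_ne_zero_of_mul hn)
  have hgeom : cyclotomic (ℓ * k) ℤ ∣ ∑ i ∈ range ℓ, (X ^ k) ^ i := by
    have hk : k ∈ (ℓ * k).properDivisors :=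
      Nat.mem_properDivisors.mpr ⟨dvd_mul_left k ℓ, by nlinarith [hℓ.out.two_le]⟩
    have h1 := X_pow_sub_one_mul_cyclotomic_dvd_X_pow_sub_one_of_dvd ℤ hk
    rw [show (X ^ (ℓ * k) - 1 : ℤ[X]) = (X ^ k - 1) * ∑ i ∈ range ℓ, (X ^ k) ^ i by
      rw [mul_geom_sum, ← pow_mul, mul_comm]] at h1
    have h0 : (X ^ k - 1 : ℤ[X]) ≠ 0 := by simpa using X_pow_sub_C_ne_zero hk0 (1 : ℤ)
    exact (mul_dvd_mul_iff_left h0).mp h1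
  have hdvd : (cyclotomic (ℓ * k) ℤ).eval q ∣ ∑ i ∈ range ℓ, (q ^ k) ^ i := by
    simpa [eval_finsetSum] using eval_dvd (x := q) hgeom
  -- `q ^ k ≡ (q ^ k) ^ ℓ = q ^ (ℓ * k) ≡ 1 (mod ℓ)`, so `∑ (q ^ k) ^ i` is divisible by `ℓ`
  -- exactly once.
  have hqk : (ℓ : ℤ) ∣ q ^ k - 1 := by
    have h1 : (ℓ : ℤ) ∣ (q ^ k) ^ ℓ - 1 := by
      simpa [← pow_mul, mul_comm] using
        h.trans (eval_dvd (x := q) (cyclotomic.dvd_X_pow_sub_one (ℓ * k) ℤ))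
    rw [← ZMod.intCast_zmod_eq_zero_iff_dvd] at h1 ⊢
    push_cast at h1 ⊢
    rwa [ZMod.pow_card] at h1
  have hℓZ : Prime (ℓ : ℤ) := Nat.prime_iff_prime_int.mp hℓ.out
  have hqkℓ : ¬ (ℓ : ℤ) ∣ q ^ k := fun hq =>
    hℓZ.not_dvd_one (by simpa using dvd_sub hq hqk)
  have hmult := emultiplicity_geom_sum₂_eq_one hℓZ (hℓ.out.odd_of_ne_two hℓ2) (x := q ^ k)
    (y := 1) (by simpa using hqk) hqkℓ
  simp only [one_pow, mul_one] at hmult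
  intro hsq
  have := pow_dvd_iff_le_emultiplicity.mp (hsq.trans hdvd)
  rw [hmult] at this
  norm_num at this

end PrimeDivisorsOfCyclotomicValues

theorem IsPrimitiveRoot.pow_eq_neg_one_of_two_mul {R : Type*} [CommRing R] [IsDomain R] {ζ : R}
    {m : ℕ} (h : IsPrimitiveRoot ζ (2 * m)) (hm : m ≠ 0) : ζ ^ m = -1 := by
  have h2 := h.pow_of_dvd hm (dvd_mul_left m 2)
  rw [Nat.mul_div_cancel _ (Nat.pos_of_ne_zero hm)] at h2
  exact h2.eq_neg_one_of_two_right

section PrimitiveRootModPrime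

variable {ℓ q : ℕ} [Fact ℓ.Prime]

theorem dvd_pow_add_one_of_isPrimitiveRoot {m : ℕ} (h : IsPrimitiveRoot (q : ZMod ℓ) (2 * m))
    (hm : m ≠ 0) : ℓ ∣ q ^ m + 1 := by
  rw [← ZMod.natCast_eq_zero_iff]
  push_cast
  rw [h.pow_eq_neg_one_of_two_mul hm, neg_add_cancel]

theorem not_dvd_pow_sub_one_of_isPrimitiveRoot {n f : ℕ} (h : IsPrimitiveRoot (q : ZMod ℓ) n)
    (hf : 0 < f) (hfn : f < n) : ¬ ℓ ∣ q ^ f - 1 := by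
  intro hdvd
  have hq : q ≠ 0 := by
    rintro rfl
    exact h.ne_zero (by omega) Nat.cast_zero
  rw [← ZMod.natCast_eq_zero_iff, Nat.cast_sub (Nat.one_le_pow _ _ (Nat.pos_of_ne_zero hq)),
    sub_eq_zero] at hdvd
  push_cast at hdvd
  exact absurd (Nat.le_of_dvd hf (h.dvd_of_pow_eq_one f hdvd)) (by omega)

end PrimitiveRootModPrime

theorem three_mul_le_two_pow_sub_one {p : ℕ} (hp : 5 ≤ p) : 3 * p ≤ 2 ^ (p - 1) := by
  induction p, hp using Nat.le_induction with
  | base => norm_num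
  | succ p hp ih =>
    rw [show p + 1 - 1 = p - 1 + 1 by omega, pow_succ]
    omega

theorem three_mul_le_pow_totient {q m p : ℕ} (hq : 2 ≤ q) (hm : Odd m) (hp : p.Prime) (hp2 : p ≠ 2)
    (hpm : p ∣ m) (hexc : (q, m) ≠ (2, 3)) : 3 * p ≤ q ^ m.totient := by
  have hφ : p - 1 ≤ m.totient := by
    rw [← Nat.totient_prime hp]
    exact Nat.le_of_dvd (Nat.totient_pos.mpr hm.pos) (Nat.totient_dvd_of_dvd hpm)
  rcases (show p = 3 ∨ 5 ≤ p by have := hp.two_le; have := hp.odd_of_ne_two hp2; grind) with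
    rfl | hp5
  · obtain ⟨k, rfl⟩ := hpm
    rcases (show k = 1 ∨ 3 ≤ k by grind) with rfl | hk
    · have hq3 : 3 ≤ q := by grind
      rw [mul_one, Nat.totient_prime Nat.prime_three, show 3 - 1 = 2 from rfl]
      nlinarith
    · have hk2 := Nat.two_le_totient (by omega : 2 < k)
      calc 3 * 3 ≤ 2 ^ 4 := by norm_num
        _ ≤ q ^ 4 := Nat.pow_le_pow_left hq 4
        _ ≤ q ^ (3 * k).totient := Nat.pow_le_pow_right (by omega) (by
          have := Nat.totient_super_multiplicative 3 k
          have := Nat.totient_prime Nat.prime_three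
          nlinarith)
  · calc 3 * p ≤ 2 ^ (p - 1) := three_mul_le_two_pow_sub_one hp5
      _ ≤ q ^ (p - 1) := Nat.pow_le_pow_left hq _
      _ ≤ q ^ m.totient := Nat.pow_le_pow_right (by omega) hφ

theorem Nat.eq_of_unique_prime_dvd_of_not_sq_dvd {N p : ℕ} (hN0 : N ≠ 0) (hN1 : N ≠ 1)
    (huniq : ∀ {r : ℕ}, r.Prime → r ∣ N → r = p) (hsq : ¬ p ^ 2 ∣ N) : N = p := by
  obtain ⟨k, hk⟩ : ∃ k, N = p ^ k := ⟨_, Nat.eq_prime_pow_of_unique_prime_dvd hN0 huniq⟩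
  have hk2 : k < 2 := by
    by_contra! hk2
    exact hsq (hk ▸ pow_dvd_pow p hk2)
  have hk0 : k ≠ 0 := by
    rintro rfl
    exact hN1 (by rw [hk, pow_zero])
  rw [hk, show k = 1 by omega, pow_one]

theorem cyclotomic_two_mul_eval_eq_prime_of_forall_prime_dvd {q : ℤ} {m : ℕ} (hm : Odd m)
    (hm1 : 1 < m) (hΦ : 1 < (cyclotomic (2 * m) ℤ).eval q)
    (hall : ∀ ℓ : ℕ, ℓ.Prime → (ℓ : ℤ) ∣ (cyclotomic (2 * m) ℤ).eval q → ℓ ∣ 2 * m) :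
    ∃ p : ℕ, p.Prime ∧ p ≠ 2 ∧ p ∣ m ∧ (cyclotomic (2 * m) ℤ).eval q = p := by
  set Φ := (cyclotomic (2 * m) ℤ).eval q
  have hn : 2 * m ≠ 0 := by omega
  set N := Φ.natAbs
  have hNΦ : (N : ℤ) = Φ := Int.natAbs_of_nonneg (by omega)
  have hN1 : N ≠ 1 := by omega
  set p := N.minFac
  have hp : p.Prime := Nat.minFac_prime hN1
  have : Fact p.Prime := ⟨hp⟩
  have hpΦ : (p : ℤ) ∣ Φ := Int.natCast_dvd.mpr (Nat.minFac_dvd N)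
  have hpn := hall p hp hpΦ
  have hp2 : p ≠ 2 := by
    -- otherwise the odd prime factor `m.minFac` of `2 * m` would be smaller than `2`
    intro hp2
    have hr := Nat.minFac_prime (show m ≠ 1 by omega)
    have hr2 : m.minFac ≠ 2 := fun h => (Nat.not_even_iff_odd.mpr hm)
      (even_iff_two_dvd.mpr (h ▸ Nat.minFac_dvd m))
    have := lt_of_prime_dvd_of_dvd_cyclotomic_eval hn hpΦ hr
      ((Nat.minFac_dvd m).mul_left 2) (hp2 ▸ hr2)
    have := hr.two_le
    omega
  have huniq : ∀ {r : ℕ}, r.Prime → r ∣ N → r = p := by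
    intro r hr hrN
    have hrΦ : (r : ℤ) ∣ Φ := Int.natCast_dvd.mpr hrN
    have : Fact r.Prime := ⟨hr⟩
    by_contra hrp
    exact lt_asymm (lt_of_prime_dvd_of_dvd_cyclotomic_eval hn hpΦ hr (hall r hr hrΦ) hrp)
      (lt_of_prime_dvd_of_dvd_cyclotomic_eval hn hrΦ hp hpn (Ne.symm hrp))
  have hsq : ¬ p ^ 2 ∣ N := fun h =>
    not_sq_dvd_cyclotomic_eval hn hp2 hpn hpΦ (by exact_mod_cast Int.natCast_dvd.mpr h)
  refine ⟨p, hp, hp2, (Nat.coprime_primes hp Nat.prime_two |>.mpr hp2).dvd_of_dvd_mul_left hpn, ?_⟩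
  rw [← hNΦ, Nat.eq_of_unique_prime_dvd_of_not_sq_dvd (by omega) hN1 huniq hsq]

theorem exists_prime_isPrimitiveRoot_two_mul {q m : ℕ} (hq : 2 ≤ q) (hm : Odd m) (hm1 : 1 < m)
    (hexc : (q, m) ≠ (2, 3)) : ∃ ℓ : ℕ, ℓ.Prime ∧ IsPrimitiveRoot (q : ZMod ℓ) (2 * m) := by
  set Φ := (cyclotomic (2 * m) ℤ).eval (q : ℤ)
  have hbound : (q : ℝ) ^ m.totient < 3 * Φ := by
    have h := pow_totient_lt_three_mul_cyclotomic_two_mul_eval (q := q) (by exact_mod_cast hq) hm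
    rwa [show (cyclotomic (2 * m) ℝ).eval (q : ℝ) = Φ by
      simpa using cyclotomic.eval_apply (q : ℤ) (2 * m) (Int.castRingHom ℝ)] at h
  have hΦ1 : 1 < Φ := by
    have hφ := Nat.two_le_totient (by rcases hm with ⟨k, hk⟩; omega : 2 < m)
    have : 4 ≤ q ^ m.totient :=
      calc 4 = 2 ^ 2 := by norm_num
        _ ≤ q ^ 2 := Nat.pow_le_pow_left hq 2
        _ ≤ q ^ m.totient := Nat.pow_le_pow_right (by omega) hφ
    have : (1 : ℝ) < Φ := by
      have : (4 : ℝ) ≤ (q : ℝ) ^ m.totient := by exact_mod_cast this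
      linarith
    exact_mod_cast this
  by_contra! hnone
  have hall : ∀ ℓ : ℕ, ℓ.Prime → (ℓ : ℤ) ∣ Φ → ℓ ∣ 2 * m := by
    intro ℓ hℓ hℓΦ
    by_contra hℓn
    have : Fact ℓ.Prime := ⟨hℓ⟩
    apply hnone ℓ hℓ
    simpa [Nat.factorization_eq_zero_of_not_dvd hℓn] using
      isPrimitiveRoot_ordCompl_of_dvd_cyclotomic_eval (by omega) hℓΦ
  obtain ⟨p, hp, hp2, hpm, hΦp⟩ :=
    cyclotomic_two_mul_eval_eq_prime_of_forall_prime_dvd hm hm1 hΦ1 hall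
  have h3p : ((3 * p : ℕ) : ℝ) ≤ (q : ℝ) ^ m.totient := by
    exact_mod_cast three_mul_le_pow_totient hq hm hp hp2 hpm hexc
  rw [show Φ = p from hΦp] at hbound
  push_cast at h3p hbound
  linarith

/-- For `q ≥ 2`, `a ≥ 2` with `(q, a) ≠ (2, 2)` there is a prime `ℓ` dividing
`q^(2a-1) + 1` that divides no `q^f - 1` for `1 ≤ f < 2(2a-1)`. -/
theorem stmt_16 (q a : ℕ) (hq : 2 ≤ q) (ha : 2 ≤ a) (hexc : (q, a) ≠ (2, 2)) :
    ∃ ℓ : ℕ, ℓ.Prime ∧ ℓ ∣ q ^ (2 * a - 1) + 1 ∧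
      ∀ f : ℕ, 1 ≤ f → f < 2 * (2 * a - 1) → ¬ ℓ ∣ q ^ f - 1 := by
  obtain ⟨ℓ, hℓ, hprim⟩ := exists_prime_isPrimitiveRoot_two_mul hq
    (m := 2 * a - 1) ⟨a - 1, by omega⟩ (by omega)
    (fun h => hexc (by simp only [Prod.mk.injEq] at h ⊢; omega))
  have : Fact ℓ.Prime := ⟨hℓ⟩
  exact ⟨ℓ, hℓ, dvd_pow_add_one_of_isPrimitiveRoot hprim (by omega),
    fun f hf hfn => not_dvd_pow_sub_one_of_isPrimitiveRoot hprim hf hfn⟩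
end
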